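/- arXiv:1105.2499 — 5 statements merged into one kernel-verified Lean document; each statement's English description precedes it below -/
import Mathlib

section
/- For random variables X taking values in {0,1} and Y taking values in a finite set, with joint probability p(x,y), the mutual information satisfies I(X:Y) ≤ sqrt(1 - 4(Σ_y p(0,y)^{1/2} p(1,y)^{1/2})^2). -/
open Finset

/-- Shannon entropy (base 2) of a finitely supported probability vector. -/
noncomputable def shannonEntropy {α : Type*} [Fintype α] (q : α → ℝ) : ℝ :=
  -∑ a, q a * Real.logb 2 (q a)

/-- Mutual information of a joint distribution `p` on `Fin 2 × Y`:
`I(X:Y) = H(X) + H(Y) - H(X,Y)`. -/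
noncomputable def mutualInfo {Y : Type*} [Fintype Y] (p : Fin 2 → Y → ℝ) : ℝ :=
  shannonEntropy (fun x => ∑ y, p x y) + shannonEntropy (fun y => ∑ x, p x y)
    - shannonEntropy (fun zy : Fin 2 × Y => p zy.1 zy.2)

section Aux
open Real


private noncomputable def gfun (x : ℝ) : ℝ := Real.binEntropy x - 4 * Real.log 2 * (x * (1 - x))
private noncomputable def gfun' (x : ℝ) : ℝ :=
  (Real.log (1 - x) - Real.log x) - 4 * Real.log 2 * (1 - 2 * x)
private noncomputable def gfun'' (x : ℝ) : ℝ := 8 * Real.log 2 - (1 / x + 1 / (1 - x))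

private lemma log2_gt : (1:ℝ)/2 < Real.log 2 := by
  have := Real.log_two_gt_d9; linarith

private lemma hasDerivAt_gfun {x : ℝ} (h0 : x ≠ 0) (h1 : x ≠ 1) :
    HasDerivAt gfun (gfun' x) x := by
  have h2 : HasDerivAt (fun y : ℝ => y * (1 - y)) (1 - 2 * x) x := by
    have := (hasDerivAt_id x).mul ((hasDerivAt_const x (1:ℝ)).sub (hasDerivAt_id x))
    exact this.congr_deriv (by simp only [Pi.sub_apply, id]; ring)
  have := (Real.hasDerivAt_binEntropy h0 h1).sub ((h2.const_mul (4 * Real.log 2)))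
  exact this

private lemma hasDerivAt_gfun' {x : ℝ} (h0 : x ≠ 0) (h1 : (1:ℝ) - x ≠ 0) :
    HasDerivAt gfun' (gfun'' x) x := by
  have hl1 : HasDerivAt (fun y : ℝ => Real.log (1 - y)) (-(1 / (1 - x))) x := by
    have hs : HasDerivAt (fun y : ℝ => 1 - y) (-1 : ℝ) x := by
      exact ((hasDerivAt_const x (1:ℝ)).sub (hasDerivAt_id x)).congr_deriv (by norm_num)
    have := hs.log h1
    convert this using 1; field_simp
  have hl2 : HasDerivAt Real.log (1 / x) x := by
    simpa [one_div] using (Real.hasDerivAt_log h0)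
  have hpoly : HasDerivAt (fun y : ℝ => 4 * Real.log 2 * (1 - 2 * y)) (-(8 * Real.log 2)) x := by
    have := ((hasDerivAt_const x (1:ℝ)).sub ((hasDerivAt_id x).const_mul 2)).const_mul
      (4 * Real.log 2)
    exact this.congr_deriv (by ring)
  have := (hl1.sub hl2).sub hpoly
  exact this.congr_deriv (by unfold gfun''; ring)

/-- the critical point -/
private noncomputable def ccrit : ℝ := (1 - Real.sqrt (1 - 1 / (2 * Real.log 2))) / 2

private lemma ccrit_facts :
    0 < ccrit ∧ ccrit < 1/2 ∧ ccrit * (1 - ccrit) = 1 / (8 * Real.log 2) := by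
  have hL := log2_gt
  have hL2 := Real.log_two_lt_d9
  have h1 : (0:ℝ) < 1 - 1 / (2 * Real.log 2) := by
    rw [sub_pos, div_lt_one (by linarith)]; linarith
  have h2 : 1 - 1 / (2 * Real.log 2) < 1 := by
    have : 0 < 1 / (2 * Real.log 2) := by positivity
    linarith
  have hs0 : 0 < Real.sqrt (1 - 1 / (2 * Real.log 2)) := Real.sqrt_pos.mpr h1
  have hs1 : Real.sqrt (1 - 1 / (2 * Real.log 2)) < 1 := by
    exact (Real.sqrt_lt' one_pos).mpr (by linarith)
  have hsq : Real.sqrt (1 - 1 / (2 * Real.log 2)) ^ 2 = 1 - 1 / (2 * Real.log 2) :=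
    Real.sq_sqrt (le_of_lt h1)
  refine ⟨by unfold ccrit; linarith, by unfold ccrit; linarith, ?_⟩
  unfold ccrit
  have : ((1 - Real.sqrt (1 - 1 / (2 * Real.log 2))) / 2) * (1 - (1 - Real.sqrt (1 - 1 / (2 * Real.log 2))) / 2)
      = (1 - Real.sqrt (1 - 1 / (2 * Real.log 2)) ^ 2) / 4 := by ring
  rw [this, hsq]
  field_simp
  ring

/-- On `[ccrit, 1/2]`, `gfun x ≥ 0`. -/
private lemma gfun_nonneg_right : ∀ x ∈ Set.Icc ccrit (1/2 : ℝ), 0 ≤ gfun x := by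
  obtain ⟨hc0, hc12, hcval⟩ := ccrit_facts
  have hL := log2_gt
  -- continuity of gfun' on [ccrit, 1/2]
  have hcont' : ContinuousOn gfun' (Set.Icc ccrit (1/2)) := by
    apply ContinuousOn.sub
    · apply ContinuousOn.sub
      · apply ContinuousOn.log
        · fun_prop
        · intro x hx; simp only [Set.mem_Icc] at hx; intro h; linarith [hx.2]
      · apply ContinuousOn.log
        · fun_prop
        · intro x hx; simp only [Set.mem_Icc] at hx; intro h; linarith [hx.1]
    · fun_prop
  -- gfun' is monotone on [ccrit, 1/2]
  have hmono' : MonotoneOn gfun' (Set.Icc ccrit (1/2)) := by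
    apply monotoneOn_of_deriv_nonneg (convex_Icc _ _) hcont'
    · intro x hx
      rw [interior_Icc] at hx
      have hx0 : (0:ℝ) < x := by linarith [hx.1]
      have hx1 : (0:ℝ) < 1 - x := by linarith [hx.2]
      exact (hasDerivAt_gfun' hx0.ne' hx1.ne').differentiableAt.differentiableWithinAt
    · intro x hx
      rw [interior_Icc] at hx
      have hx0 : 0 < x := by linarith [hx.1]
      have hx1 : 0 < 1 - x := by linarith [hx.2]
      rw [(hasDerivAt_gfun' hx0.ne' hx1.ne').deriv]
      unfold gfun''
      have hxc : 1 / (8 * Real.log 2) ≤ x * (1 - x) := by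
        rw [← hcval]
        nlinarith [mul_pos (sub_pos.mpr hx.1) (show 0 < 1 - x - ccrit by linarith [hx.2])]
      have heq : 1 / x + 1 / (1 - x) = 1 / (x * (1 - x)) := by field_simp; ring
      rw [heq, sub_nonneg, div_le_iff₀ (by positivity)]
      have h8 : 8 * Real.log 2 * (1 / (8 * Real.log 2)) = 1 := by
        field_simp
      nlinarith [hxc, (by linarith : (0:ℝ) < 8 * Real.log 2)]
  have hg'half : gfun' (1/2) = 0 := by unfold gfun'; norm_num
  have hg'nonpos : ∀ x ∈ Set.Icc ccrit (1/2:ℝ), gfun' x ≤ 0 := by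
    intro x hx
    have h := hmono' hx (Set.right_mem_Icc.mpr (by linarith)) hx.2
    rwa [hg'half] at h
  have hcontg : ContinuousOn gfun (Set.Icc ccrit (1/2)) := by
    unfold gfun
    apply ContinuousOn.sub
    · exact Real.binEntropy_continuous.continuousOn
    · fun_prop
  have hanti : AntitoneOn gfun (Set.Icc ccrit (1/2)) := by
    apply antitoneOn_of_deriv_nonpos (convex_Icc _ _) hcontg
    · intro x hx
      rw [interior_Icc] at hx
      have hx0 : (0:ℝ) < x := by linarith [hx.1]
      have hx1 : x ≠ 1 := by intro h; rw [h] at hx; linarith [hx.2]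
      exact (hasDerivAt_gfun hx0.ne' hx1).differentiableAt.differentiableWithinAt
    · intro x hx
      rw [interior_Icc] at hx
      have hx0 : (0:ℝ) < x := by linarith [hx.1]
      have hx1 : x ≠ 1 := by intro h; rw [h] at hx; linarith [hx.2]
      rw [(hasDerivAt_gfun hx0.ne' hx1).deriv]
      exact hg'nonpos x ⟨hx.1.le, hx.2.le⟩
  have ghalf : gfun (1/2) = 0 := by
    unfold gfun
    rw [show (1/2:ℝ) = 2⁻¹ by norm_num, Real.binEntropy_two_inv]
    ring
  intro x hx
  have h := hanti hx (Set.right_mem_Icc.mpr (by linarith)) hx.2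
  rwa [ghalf] at h

/-- On `[0, ccrit]`, `gfun x ≥ 0`. -/
private lemma gfun_nonneg_left : ∀ x ∈ Set.Icc (0:ℝ) ccrit, 0 ≤ gfun x := by
  obtain ⟨hc0, hc12, hcval⟩ := ccrit_facts
  have hL := log2_gt
  have hderiv_eq : ∀ x ∈ Set.Ioo (0:ℝ) ccrit, deriv gfun =ᶠ[nhds x] gfun' := by
    intro x hx
    filter_upwards [isOpen_Ioo.mem_nhds hx] with y hy
    have hy1 : y ≠ 1 := by intro h; rw [h] at hy; exact absurd hy.2 (by linarith)
    exact (hasDerivAt_gfun (ne_of_gt hy.1) hy1).deriv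
  have hconc : ConcaveOn ℝ (Set.Icc (0:ℝ) ccrit) gfun := by
    apply concaveOn_of_deriv2_nonpos (convex_Icc _ _)
    · unfold gfun
      apply ContinuousOn.sub
      · exact Real.binEntropy_continuous.continuousOn
      · fun_prop
    · rw [interior_Icc]
      intro x hx
      have hx1 : x ≠ 1 := by intro h; rw [h] at hx; exact absurd hx.2 (by linarith)
      exact (hasDerivAt_gfun (ne_of_gt hx.1) hx1).differentiableAt.differentiableWithinAt
    · rw [interior_Icc]
      intro x hx
      have hx1 : (1:ℝ) - x ≠ 0 := by intro h; nlinarith [hx.2]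
      exact ((hasDerivAt_gfun' (ne_of_gt hx.1) hx1).differentiableAt.congr_of_eventuallyEq
        (hderiv_eq x hx)).differentiableWithinAt
    · rw [interior_Icc]
      intro x hx
      have hx1 : (1:ℝ) - x ≠ 0 := by intro h; nlinarith [hx.2]
      have h2 : deriv^[2] gfun x = gfun'' x := by
        have : deriv (deriv gfun) x = deriv gfun' x := (hderiv_eq x hx).deriv_eq
        simp only [Function.iterate_succ, Function.iterate_zero, Function.comp_apply, id_eq]
        rw [this, (hasDerivAt_gfun' (ne_of_gt hx.1) hx1).deriv]
      rw [h2]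
      unfold gfun''
      have hx0 : (0:ℝ) < x := hx.1
      have hxlt : x < ccrit := hx.2
      have hx1' : (0:ℝ) < 1 - x := by nlinarith
      have hxc : x * (1 - x) ≤ 1 / (8 * Real.log 2) := by
        rw [← hcval]
        nlinarith [mul_pos (sub_pos.mpr hxlt) (show 0 < 1 - ccrit - x by linarith)]
      have heq : 1 / x + 1 / (1 - x) = 1 / (x * (1 - x)) := by field_simp; ring
      rw [heq, sub_nonpos, le_div_iff₀ (by positivity)]
      have h8 : 8 * Real.log 2 * (1 / (8 * Real.log 2)) = 1 := by field_simp
      nlinarith [(by linarith : (0:ℝ) < 8 * Real.log 2)]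
  intro x hx
  have hg0 : gfun 0 = 0 := by unfold gfun; simp
  have hgc : 0 ≤ gfun ccrit :=
    gfun_nonneg_right ccrit (Set.left_mem_Icc.mpr (by linarith))
  rcases eq_or_lt_of_le hx.1 with h0 | h0
  · rw [← h0, hg0]
  · have hb : 0 ≤ x / ccrit := by positivity
    have ha : 0 ≤ 1 - x / ccrit := by
      rw [sub_nonneg, div_le_one hc0]; exact hx.2
    have hab : (1 - x / ccrit) + x / ccrit = 1 := by ring
    have := hconc.2 (Set.left_mem_Icc.mpr (by linarith)) (Set.right_mem_Icc.mpr (by linarith))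
      ha hb hab
    simp only [smul_eq_mul, mul_zero, zero_add] at this
    rw [hg0] at this
    have hxe : x / ccrit * ccrit = x := by field_simp
    rw [hxe] at this
    nlinarith [this]

/-- The key inequality: `4 log 2 · p(1-p) ≤ binEntropy p` on `[0,1]`. -/
private lemma gfun_nonneg : ∀ x ∈ Set.Icc (0:ℝ) 1, 0 ≤ gfun x := by
  obtain ⟨hc0, hc12, hcval⟩ := ccrit_facts
  have half : ∀ x ∈ Set.Icc (0:ℝ) (1/2), 0 ≤ gfun x := by
    intro x hx
    rcases le_total x ccrit with h | h
    · exact gfun_nonneg_left x ⟨hx.1, h⟩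
    · exact gfun_nonneg_right x ⟨h, hx.2⟩
  intro x hx
  rcases le_total x (1/2) with h | h
  · exact half x ⟨hx.1, h⟩
  · have hsym : gfun x = gfun (1 - x) := by
      unfold gfun
      rw [Real.binEntropy_one_sub]
      ring_nf
    rw [hsym]
    exact half (1 - x) ⟨by linarith [hx.2], by linarith⟩




private lemma binent_logb {t : ℝ} (h0 : 0 ≤ t) (h1 : t ≤ 1) :
    4 * t * (1 - t) ≤ -(t * Real.logb 2 t) - (1 - t) * Real.logb 2 (1 - t) := by
  have hL := log2_gt
  have hg := gfun_nonneg t ⟨h0, h1⟩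
  unfold gfun at hg
  have hb : Real.binEntropy t = -(t * Real.log t) - (1 - t) * Real.log (1 - t) := by
    rw [Real.binEntropy, Real.log_inv, Real.log_inv]; ring
  rw [hb] at hg
  simp only [Real.logb]
  rw [show -(t * (Real.log t / Real.log 2)) - (1 - t) * (Real.log (1 - t) / Real.log 2)
      = (-(t * Real.log t) - (1 - t) * Real.log (1 - t)) / Real.log 2 by ring]
  rw [le_div_iff₀ (by linarith)]
  nlinarith

private lemma binent_le_one {a b : ℝ} (ha : 0 ≤ a) (hab : a + b = 1) :
    -(a * Real.logb 2 a) - b * Real.logb 2 b ≤ 1 := by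
  have hL := log2_gt
  have hble : Real.binEntropy a ≤ Real.log 2 := Real.binEntropy_le_log_two
  have hb : Real.binEntropy a = -(a * Real.log a) - (1 - a) * Real.log (1 - a) := by
    rw [Real.binEntropy, Real.log_inv, Real.log_inv]; ring
  have hbeq : b = 1 - a := by linarith
  subst hbeq
  simp only [Real.logb]
  rw [show -(a * (Real.log a / Real.log 2)) - (1 - a) * (Real.log (1 - a) / Real.log 2)
      = (-(a * Real.log a) - (1 - a) * Real.log (1 - a)) / Real.log 2 by ring]
  rw [div_le_one (by linarith)]
  linarith [hb ▸ hble]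

private lemma perterm {a b : ℝ} (ha : 0 ≤ a) (hb : 0 ≤ b) :
    4 * (if a + b = 0 then 0 else a * b / (a + b)) ≤
      (a + b) * Real.logb 2 (a + b) - a * Real.logb 2 a - b * Real.logb 2 b := by
  rcases eq_or_lt_of_le ha with h0 | h0
  · rw [← h0]
    split_ifs <;> simp
  · rcases eq_or_lt_of_le hb with h1 | h1
    · rw [← h1]
      split_ifs <;> simp
    · have hq : 0 < a + b := by linarith
      rw [if_neg hq.ne']
      have ht0 : 0 ≤ a / (a + b) := by positivity
      have ht1 : a / (a + b) ≤ 1 := by rw [div_le_one hq]; linarith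
      have h := binent_logb ht0 ht1
      have h1t : 1 - a / (a + b) = b / (a + b) := by field_simp; ring
      rw [h1t, Real.logb_div h0.ne' hq.ne', Real.logb_div h1.ne' hq.ne'] at h
      have hmul := mul_le_mul_of_nonneg_left h hq.le
      have e1 : (a + b) * (4 * (a / (a + b)) * (b / (a + b))) = 4 * (a * b / (a + b)) := by
        field_simp
      have e2 : (a + b) * (-(a / (a + b) * (Real.logb 2 a - Real.logb 2 (a + b)))
            - b / (a + b) * (Real.logb 2 b - Real.logb 2 (a + b)))
          = (a + b) * Real.logb 2 (a + b) - a * Real.logb 2 a - b * Real.logb 2 b := by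
        field_simp; ring
      rw [e1, e2] at hmul
      exact hmul

end Aux

theorem stmt0 {Y : Type*} [Fintype Y] (p : Fin 2 → Y → ℝ)
    (hp : ∀ x y, 0 ≤ p x y) (hsum : ∑ x, ∑ y, p x y = 1) :
    mutualInfo p ≤
      Real.sqrt (1 - 4 * (∑ y, Real.sqrt (p 0 y) * Real.sqrt (p 1 y)) ^ 2) := by
  classical
  have hP0 : 0 ≤ ∑ y, p 0 y := Finset.sum_nonneg fun y _ => hp 0 y
  have hP1 : 0 ≤ ∑ y, p 1 y := Finset.sum_nonneg fun y _ => hp 1 y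
  have hPsum : (∑ y, p 0 y) + (∑ y, p 1 y) = 1 := by
    rw [Fin.sum_univ_two] at hsum; exact hsum
  set F := ∑ y, Real.sqrt (p 0 y) * Real.sqrt (p 1 y) with hFdef
  set r : Y → ℝ := fun y => if p 0 y + p 1 y = 0 then 0 else p 0 y * p 1 y / (p 0 y + p 1 y)
    with hrdef
  have hrnn : ∀ y, 0 ≤ r y := by
    intro y
    rw [hrdef]
    dsimp only
    split_ifs with h
    · exact le_rfl
    · exact div_nonneg (mul_nonneg (hp 0 y) (hp 1 y)) (add_nonneg (hp 0 y) (hp 1 y))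
  -- rewrite mutual information
  have hMI : mutualInfo p = (-((∑ y, p 0 y) * Real.logb 2 (∑ y, p 0 y)
        + (∑ y, p 1 y) * Real.logb 2 (∑ y, p 1 y)))
      - ∑ y, ((p 0 y + p 1 y) * Real.logb 2 (p 0 y + p 1 y)
        - p 0 y * Real.logb 2 (p 0 y) - p 1 y * Real.logb 2 (p 1 y)) := by
    rw [mutualInfo, shannonEntropy, shannonEntropy, shannonEntropy]
    rw [Fintype.sum_prod_type]
    simp only [Fin.sum_univ_two]
    rw [Finset.sum_sub_distrib, Finset.sum_sub_distrib]
    ring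
  -- entropy of X is at most 1
  have hH : -((∑ y, p 0 y) * Real.logb 2 (∑ y, p 0 y)
      + (∑ y, p 1 y) * Real.logb 2 (∑ y, p 1 y)) ≤ 1 := by
    have := binent_le_one hP0 hPsum
    linarith
  -- conditional-entropy-difference lower bound
  have hDsum : 4 * ∑ y, r y ≤ ∑ y, ((p 0 y + p 1 y) * Real.logb 2 (p 0 y + p 1 y)
      - p 0 y * Real.logb 2 (p 0 y) - p 1 y * Real.logb 2 (p 1 y)) := by
    rw [Finset.mul_sum]
    exact Finset.sum_le_sum fun y _ => perterm (hp 0 y) (hp 1 y)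
  -- Cauchy-Schwarz : F^2 ≤ ∑ r
  have hq1 : ∑ y, (p 0 y + p 1 y) = 1 := by
    rw [Finset.sum_add_distrib]; exact hPsum
  have hCS : F ^ 2 ≤ ∑ y, r y := by
    have key := Finset.sum_mul_sq_le_sq_mul_sq Finset.univ
      (fun y => Real.sqrt (p 0 y + p 1 y)) (fun y => Real.sqrt (r y))
    have e1 : ∀ y : Y, Real.sqrt (p 0 y + p 1 y) * Real.sqrt (r y)
        = Real.sqrt (p 0 y) * Real.sqrt (p 1 y) := by
      intro y
      rw [← Real.sqrt_mul (add_nonneg (hp 0 y) (hp 1 y)), ← Real.sqrt_mul (hp 0 y)]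
      congr 1
      rw [hrdef]
      dsimp only
      split_ifs with h
      · have h0 : p 0 y = 0 := le_antisymm (by linarith [hp 1 y, h.le]) (hp 0 y)
        rw [h0]; ring
      · field_simp
    have e2 : ∀ y : Y, Real.sqrt (p 0 y + p 1 y) ^ 2 = p 0 y + p 1 y := fun y =>
      Real.sq_sqrt (add_nonneg (hp 0 y) (hp 1 y))
    have e3 : ∀ y : Y, Real.sqrt (r y) ^ 2 = r y := fun y => Real.sq_sqrt (hrnn y)
    simp only [e1, e2, e3] at key
    rw [hq1, one_mul] at key
    exact key
  -- F^2 ≤ 1/4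
  have hF2 : 4 * F ^ 2 ≤ 1 := by
    have key := Finset.sum_mul_sq_le_sq_mul_sq Finset.univ
      (fun y => Real.sqrt (p 0 y)) (fun y => Real.sqrt (p 1 y))
    have e2 : ∀ y : Y, Real.sqrt (p 0 y) ^ 2 = p 0 y := fun y => Real.sq_sqrt (hp 0 y)
    have e3 : ∀ y : Y, Real.sqrt (p 1 y) ^ 2 = p 1 y := fun y => Real.sq_sqrt (hp 1 y)
    simp only [e2, e3] at key
    nlinarith [key, hPsum, sq_nonneg ((∑ y, p 0 y) - (∑ y, p 1 y))]
  have hfin : 0 ≤ 1 - 4 * F ^ 2 := by linarith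
  have hs := Real.sq_sqrt hfin
  have hsn := Real.sqrt_nonneg (1 - 4 * F ^ 2)
  have hle1 : Real.sqrt (1 - 4 * F ^ 2) ≤ 1 := by
    have h := Real.sqrt_le_sqrt (show 1 - 4 * F ^ 2 ≤ 1 by nlinarith [sq_nonneg F])
    simpa using h
  have hlast : 1 - 4 * F ^ 2 ≤ Real.sqrt (1 - 4 * F ^ 2) := by nlinarith
  rw [hMI]
  linarith [Finset.sum_le_sum fun y (_ : y ∈ Finset.univ) => hrnn y, hDsum, hCS]
end

section
/- For a binary random variable X and finite-valued Y, the mutual information satisfies I(X:Y) ≤ Σ_y |p(0,y) − p(1,y)|, where p is the joint distribution. -/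
open Finset

/-- Convexity of exp on a chord: `2^t ≤ 1 + t` for `t ∈ [0,1]`. -/
lemma exp_mul_log_two_le {t : ℝ} (ht0 : 0 ≤ t) (ht1 : t ≤ 1) :
    Real.exp (t * Real.log 2) ≤ 1 + t := by
  have h := convexOn_exp.2 (Set.mem_univ (0:ℝ)) (Set.mem_univ (Real.log 2))
    (by linarith : (0:ℝ) ≤ 1 - t) ht0 (by ring)
  have h2 : Real.exp (Real.log 2) = 2 := Real.exp_log (by norm_num)
  simp only [smul_eq_mul, mul_zero, zero_add, Real.exp_zero, mul_one, h2] at h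
  linarith

/-- Key scalar inequality, natural-log version, for `0 ≤ u ≤ v`. -/
lemma keyA {u v : ℝ} (hu : 0 ≤ u) (huv : u ≤ v) :
    u * Real.log u + v * Real.log v + 2 * u * Real.log 2 ≤ (u + v) * Real.log (u + v) := by
  rcases eq_or_lt_of_le hu with h0 | hupos
  · simp [← h0]
  · have hv : 0 < v := lt_of_lt_of_le hupos huv
    have h1 : u * Real.log u + u * Real.log 2 ≤ u * Real.log (u + v) := by
      have hlog : Real.log (2 * u) ≤ Real.log (u + v) :=
        Real.log_le_log (by positivity) (by linarith)
      rw [Real.log_mul two_ne_zero (ne_of_gt hupos)] at hlog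
      nlinarith
    have h2 : v * Real.log v + u * Real.log 2 ≤ v * Real.log (u + v) := by
      have ht1 : u / v ≤ 1 := div_le_one_of_le₀ huv (le_of_lt hv)
      have ht0 : 0 ≤ u / v := div_nonneg hu (le_of_lt hv)
      have hexp := exp_mul_log_two_le ht0 ht1
      have hlog : (u / v) * Real.log 2 ≤ Real.log (1 + u / v) :=
        (Real.le_log_iff_exp_le (by positivity)).2 hexp
      have heq : Real.log (1 + u / v) = Real.log (u + v) - Real.log v := by
        rw [← Real.log_div (by positivity) (ne_of_gt hv)]
        congr 1
        field_simp
        ring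
      rw [heq] at hlog
      have := mul_le_mul_of_nonneg_left hlog (le_of_lt hv)
      have hv' : v * ((u / v) * Real.log 2) = u * Real.log 2 := by
        field_simp
      rw [hv'] at this
      linarith [this]
    nlinarith [h1, h2]

/-- Key scalar inequality in base-2 logs, ordered version. -/
lemma keyA2 {u v : ℝ} (hu : 0 ≤ u) (huv : u ≤ v) :
    u * Real.logb 2 u + v * Real.logb 2 v - (u + v) * Real.logb 2 (u + v)
      ≤ (v - u) - (u + v) := by
  have hl2 : 0 < Real.log 2 := Real.log_pos one_lt_two
  have hrw : u * Real.logb 2 u + v * Real.logb 2 v - (u + v) * Real.logb 2 (u + v)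
      = (u * Real.log u + v * Real.log v - (u + v) * Real.log (u + v)) / Real.log 2 := by
    simp only [Real.logb]
    ring
  rw [hrw]
  have hgoal : (v - u) - (u + v) = -(2 * u) := by ring
  rw [hgoal, div_le_iff₀ hl2]
  nlinarith [keyA hu huv]

/-- Key scalar inequality in base-2 logs. -/
lemma keyA' {u v : ℝ} (hu : 0 ≤ u) (hv : 0 ≤ v) :
    u * Real.logb 2 u + v * Real.logb 2 v - (u + v) * Real.logb 2 (u + v)
      ≤ |u - v| - (u + v) := by
  rcases le_total u v with h | h
  · have := keyA2 hu h
    rw [abs_sub_comm, abs_of_nonneg (by linarith)]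
    linarith
  · have := keyA2 hv h
    rw [abs_of_nonneg (by linarith)]
    have hc : v * Real.logb 2 v + u * Real.logb 2 u - (v + u) * Real.logb 2 (v + u)
        ≤ (u - v) - (v + u) := this
    rw [add_comm v u] at hc
    linarith

/-- `-x log x ≤ x log 2 + 1/2 - x` for `x ≥ 0`. -/
lemma negxlogx_le {x : ℝ} (hx : 0 ≤ x) :
    -(x * Real.log x) ≤ x * Real.log 2 + 1 / 2 - x := by
  rcases eq_or_lt_of_le hx with h0 | hpos
  · simp [← h0]
  · have h := Real.log_le_sub_one_of_pos (show (0:ℝ) < 1 / (2 * x) by positivity)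
    have hlog : Real.log (1 / (2 * x)) = -(Real.log 2 + Real.log x) := by
      rw [one_div, Real.log_inv, Real.log_mul two_ne_zero (ne_of_gt hpos)]
    rw [hlog] at h
    have hmul := mul_le_mul_of_nonneg_left h (le_of_lt hpos)
    have hinv : x * (1 / (2 * x) - 1) = 1 / 2 - x := by
      field_simp
    rw [hinv] at hmul
    nlinarith [hmul]

/-- Binary entropy is at most 1 bit. -/
lemma HXle {a0 a1 : ℝ} (h0 : 0 ≤ a0) (h1 : 0 ≤ a1) (hs : a0 + a1 = 1) :
    -(a0 * Real.logb 2 a0 + a1 * Real.logb 2 a1) ≤ 1 := by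
  have hl2 : 0 < Real.log 2 := Real.log_pos one_lt_two
  have hA := negxlogx_le h0
  have hB := negxlogx_le h1
  have hnat : -(a0 * Real.log a0 + a1 * Real.log a1) ≤ Real.log 2 := by nlinarith
  have hrw : -(a0 * Real.logb 2 a0 + a1 * Real.logb 2 a1)
      = -(a0 * Real.log a0 + a1 * Real.log a1) / Real.log 2 := by
    simp only [Real.logb]; ring
  rw [hrw, div_le_iff₀ hl2]
  linarith

theorem stmt1 {Y : Type*} [Fintype Y] (p : Fin 2 → Y → ℝ)
    (hp : ∀ x y, 0 ≤ p x y) (hsum : ∑ x, ∑ y, p x y = 1) :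
    mutualInfo p ≤ ∑ y, |p 0 y - p 1 y| := by
  have hl2 : 0 < Real.log 2 := Real.log_pos one_lt_two
  set A0 : ℝ := ∑ y, p 0 y with hA0
  set A1 : ℝ := ∑ y, p 1 y with hA1
  have hA0nn : 0 ≤ A0 := Finset.sum_nonneg fun y _ => hp 0 y
  have hA1nn : 0 ≤ A1 := Finset.sum_nonneg fun y _ => hp 1 y
  have hAs : A0 + A1 = 1 := by
    rw [Fin.sum_univ_two] at hsum; exact hsum
  -- Expand mutualInfo
  have hexp : mutualInfo p
      = -(A0 * Real.logb 2 A0 + A1 * Real.logb 2 A1)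
        + ∑ y, (p 0 y * Real.logb 2 (p 0 y) + p 1 y * Real.logb 2 (p 1 y)
            - (p 0 y + p 1 y) * Real.logb 2 (p 0 y + p 1 y)) := by
    unfold mutualInfo shannonEntropy
    rw [Fin.sum_univ_two]
    rw [Fintype.sum_prod_type]
    rw [Fin.sum_univ_two]
    simp only [Fin.sum_univ_two]
    rw [← hA0, ← hA1]
    rw [Finset.sum_sub_distrib, Finset.sum_add_distrib]
    ring
  rw [hexp]
  have hX : -(A0 * Real.logb 2 A0 + A1 * Real.logb 2 A1) ≤ 1 := HXle hA0nn hA1nn hAs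
  have hterm : ∑ y, (p 0 y * Real.logb 2 (p 0 y) + p 1 y * Real.logb 2 (p 1 y)
            - (p 0 y + p 1 y) * Real.logb 2 (p 0 y + p 1 y))
      ≤ ∑ y, (|p 0 y - p 1 y| - (p 0 y + p 1 y)) :=
    Finset.sum_le_sum fun y _ => keyA' (hp 0 y) (hp 1 y)
  have hq : ∑ y, (|p 0 y - p 1 y| - (p 0 y + p 1 y))
      = (∑ y, |p 0 y - p 1 y|) - 1 := by
    rw [Finset.sum_sub_distrib, Finset.sum_add_distrib, ← hA0, ← hA1, hAs]
  linarith
end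

section
/- For nonnegative reals p(0,y), p(1,y) indexed by a finite set with Σ_y (p(0,y) + p(1,y)) = 1, one has Σ_y |p(0,y) − p(1,y)| ≤ sqrt(1 − 4(Σ_y p(0,y)^{1/2} p(1,y)^{1/2})^2). -/
open Finset

theorem stmt2 {Y : Type*} [Fintype Y] (p : Fin 2 → Y → ℝ)
    (hp : ∀ x y, 0 ≤ p x y)
    (hsum : ∑ y, (p 0 y + p 1 y) = 1) :
    ∑ y, |p 0 y - p 1 y| ≤
      Real.sqrt (1 - 4 * (∑ y, Real.sqrt (p 0 y) * Real.sqrt (p 1 y)) ^ 2) := by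
  set F := ∑ y, Real.sqrt (p 0 y) * Real.sqrt (p 1 y) with hF
  set f := fun y => |Real.sqrt (p 0 y) - Real.sqrt (p 1 y)| with hf
  set g := fun y => Real.sqrt (p 0 y) + Real.sqrt (p 1 y) with hg
  have key : ∀ y, |p 0 y - p 1 y| = f y * g y := by
    intro y
    have h0 := Real.sq_sqrt (hp 0 y)
    have h1 := Real.sq_sqrt (hp 1 y)
    have : p 0 y - p 1 y = (Real.sqrt (p 0 y) - Real.sqrt (p 1 y)) *
        (Real.sqrt (p 0 y) + Real.sqrt (p 1 y)) := by nlinarith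
    rw [hf, hg]
    simp only [this, abs_mul]
    congr 1
    exact abs_of_nonneg (by positivity)
  have hf2 : ∑ y, f y ^ 2 = 1 - 2 * F := by
    have : ∀ y, f y ^ 2 = (p 0 y + p 1 y) - 2 * (Real.sqrt (p 0 y) * Real.sqrt (p 1 y)) := by
      intro y
      have h0 := Real.sq_sqrt (hp 0 y)
      have h1 := Real.sq_sqrt (hp 1 y)
      rw [hf]; simp only [sq_abs]; nlinarith
    rw [Finset.sum_congr rfl fun y _ => this y, Finset.sum_sub_distrib, hsum,
      ← Finset.mul_sum, hF]
  have hg2 : ∑ y, g y ^ 2 = 1 + 2 * F := by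
    have : ∀ y, g y ^ 2 = (p 0 y + p 1 y) + 2 * (Real.sqrt (p 0 y) * Real.sqrt (p 1 y)) := by
      intro y
      have h0 := Real.sq_sqrt (hp 0 y)
      have h1 := Real.sq_sqrt (hp 1 y)
      show (Real.sqrt (p 0 y) + Real.sqrt (p 1 y)) ^ 2 = _; nlinarith
    rw [Finset.sum_congr rfl fun y _ => this y, Finset.sum_add_distrib, hsum,
      ← Finset.mul_sum, hF]
  have cs : (∑ y, f y * g y) ^ 2 ≤ (∑ y, f y ^ 2) * (∑ y, g y ^ 2) :=
    Finset.sum_mul_sq_le_sq_mul_sq Finset.univ f g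
  have hsumnn : 0 ≤ ∑ y, f y * g y :=
    Finset.sum_nonneg fun y _ => mul_nonneg (abs_nonneg _) (by positivity)
  calc ∑ y, |p 0 y - p 1 y| = ∑ y, f y * g y := Finset.sum_congr rfl fun y _ => key y
    _ ≤ Real.sqrt ((∑ y, f y * g y) ^ 2) := by rw [Real.sqrt_sq hsumnn]
    _ ≤ Real.sqrt ((1 - 2 * F) * (1 + 2 * F)) := by
        apply Real.sqrt_le_sqrt; rw [← hf2, ← hg2]; exact cs
    _ = Real.sqrt (1 - 4 * F ^ 2) := by ring_nf
end

section
/- Let |Ψ⟩ be a unit vector, U unitary, Z₀, Z₁ projections with Z₀+Z₁=1, {E_e} a POVM, and C_z := Z_{z⊕1}UZ_z − Z_z U Z_{z⊕1}. Define p_SIFT(z,e) := ⟨Ψ|Z_z U* E_e U Z_z|Ψ⟩ and p₀(z,e) := ⟨Ψ|U* Z_z E_e U|Ψ⟩. Then |p_SIFT(z,e) − p₀(z,e)| ≤ 2 p₀(z,e)^{1/2} ⟨Ψ|C_z* E_e C_z|Ψ⟩^{1/2} + ⟨Ψ|C_z* E_e C_z|Ψ⟩. -/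
open Finset ContinuousLinearMap
open scoped InnerProductSpace

lemma cs_pos {H : Type*} [NormedAddCommGroup H] [InnerProductSpace ℂ H]
    [FiniteDimensional ℂ H] {T : H →L[ℂ] H} (hT : T.IsPositive) (x y : H) :
    |(⟪x, T y⟫_ℂ).re| ≤ Real.sqrt (⟪x, T x⟫_ℂ).re * Real.sqrt (⟪y, T y⟫_ℂ).re := by
  have hsym := (ContinuousLinearMap.isSelfAdjoint_iff_isSymmetric).mp hT.isSelfAdjoint
  have hr' : ∀ u v : H, (⟪T u, v⟫_ℂ).re = (⟪u, T v⟫_ℂ).re := by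
    intro u v; exact congrArg Complex.re (hsym u v)
  set a := (⟪y, T y⟫_ℂ).re
  set r := (⟪x, T y⟫_ℂ).re
  set c := (⟪x, T x⟫_ℂ).re
  have key : ∀ t : ℝ, 0 ≤ a * (t * t) + (2 * r) * t + c := by
    intro t
    have h0 : (0:ℝ) ≤ (⟪x + (t:ℂ) • y, T (x + (t:ℂ) • y)⟫_ℂ).re :=
      (Complex.nonneg_iff.mp (hT.inner_nonneg_right (x + (t : ℂ) • y))).1
    have hexp : (⟪x + (t:ℂ) • y, T (x + (t:ℂ) • y)⟫_ℂ).re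
        = a * (t * t) + (2 * r) * t + c := by
      have hyxre : (⟪y, T x⟫_ℂ).re = r := by
        rw [← inner_conj_symm y (T x), Complex.conj_re]; exact hr' x y
      simp only [map_add, map_smul, inner_add_left, inner_add_right,
        inner_smul_left, inner_smul_right]
      simp only [Complex.add_re, Complex.mul_re, Complex.conj_re, Complex.conj_im,
        Complex.ofReal_re, Complex.ofReal_im]
      rw [hyxre]
      simp only [a, r, c]
      ring_nf
    rw [hexp] at h0
    exact h0
  have hd := discrim_le_zero key
  have ha : (0:ℝ) ≤ a := (Complex.nonneg_iff.mp (hT.inner_nonneg_right y)).1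
  have hc : (0:ℝ) ≤ c := (Complex.nonneg_iff.mp (hT.inner_nonneg_right x)).1
  have hr2 : r * r ≤ c * a := by
    simp only [discrim] at hd; nlinarith
  calc |r| = Real.sqrt (r * r) := by rw [Real.sqrt_mul_self_eq_abs]
    _ ≤ Real.sqrt (c * a) := Real.sqrt_le_sqrt hr2
    _ = Real.sqrt c * Real.sqrt a := Real.sqrt_mul hc a

theorem stmt10 {H : Type*} [NormedAddCommGroup H] [InnerProductSpace ℂ H]
    [FiniteDimensional ℂ H] {ι : Type*} [Fintype ι]
    (Ψ : H) (hΨ : ‖Ψ‖ = 1)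
    (U : H →L[ℂ] H) (hU : U ∈ unitary (H →L[ℂ] H))
    (Z : Fin 2 → (H →L[ℂ] H))
    (hproj : ∀ z, IsIdempotentElem (Z z) ∧ IsSelfAdjoint (Z z))
    (hZsum : Z 0 + Z 1 = 1)
    (E : ι → (H →L[ℂ] H)) (hEpos : ∀ e, (E e).IsPositive) (hEsum : ∑ e, E e = 1)
    (hcomm : ∀ z e, Commute (Z z) (E e))
    (C : Fin 2 → (H →L[ℂ] H))
    (hC : ∀ z, C z = Z (z + 1) * U * Z z - Z z * U * Z (z + 1))
    (pSIFT p₀ q : Fin 2 → ι → ℝ)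
    (hpSIFT : ∀ z e, pSIFT z e = (⟪Ψ, (Z z * adjoint U * E e * U * Z z) Ψ⟫_ℂ).re)
    (hp₀ : ∀ z e, p₀ z e = (⟪Ψ, (adjoint U * Z z * E e * U) Ψ⟫_ℂ).re)
    (hq : ∀ z e, q z e = (⟪Ψ, (adjoint (C z) * E e * C z) Ψ⟫_ℂ).re) :
    ∀ z e, |pSIFT z e - p₀ z e| ≤
      2 * Real.sqrt (p₀ z e) * Real.sqrt (q z e) + q z e := by
  intro z e
  obtain ⟨hid, hsa⟩ := hproj z
  have hZadj : adjoint (Z z) = Z z := hsa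
  have hsum : Z z + Z (z + 1) = 1 := by
    fin_cases z
    · simpa using hZsum
    · simpa [add_comm] using hZsum
  -- U * Z z = Z z * U + C z
  have hUZ : U * Z z = Z z * U + C z := by
    rw [hC]
    have h1 : U * Z z = Z z * (U * Z z) + Z (z+1) * (U * Z z) := by
      rw [← add_mul, hsum, one_mul]
    have h2 : Z z * U = Z z * U * Z z + Z z * U * Z (z+1) := by
      rw [← mul_add]; rw [show Z z * U * (Z z + Z (z+1)) = Z z * U * 1 from by rw [hsum]]
      rw [mul_one]
    rw [h1]
    nth_rewrite 1 [h2]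
    simp only [← mul_assoc]
    abel
  set x : H := (Z z * U) Ψ with hx
  set y : H := (C z) Ψ with hy
  set T := E e with hT
  have hTpos : T.IsPositive := hEpos e
  have hsym := (ContinuousLinearMap.isSelfAdjoint_iff_isSymmetric).mp hTpos.isSelfAdjoint
  have hxy : (U * Z z) Ψ = x + y := by rw [hUZ]; simp [hx, hy]
  have hpS : pSIFT z e = (⟪x + y, T (x + y)⟫_ℂ).re := by
    rw [hpSIFT z e, ← hxy]
    congr 1
    calc ⟪Ψ, (Z z * adjoint U * E e * U * Z z) Ψ⟫_ℂ
        = ⟪Ψ, (Z z) ((adjoint U) ((E e) ((U * Z z) Ψ)))⟫_ℂ := by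
          simp [ContinuousLinearMap.mul_apply]
      _ = ⟪(Z z) Ψ, (adjoint U) ((E e) ((U * Z z) Ψ))⟫_ℂ := by
          nth_rewrite 1 [← hZadj]; rw [adjoint_inner_right]
      _ = ⟪U ((Z z) Ψ), (E e) ((U * Z z) Ψ)⟫_ℂ := by rw [adjoint_inner_right]
      _ = ⟪(U * Z z) Ψ, T ((U * Z z) Ψ)⟫_ℂ := rfl
  have hZE : Z z * E e = Z z * E e * Z z := by
    conv_rhs => rw [mul_assoc, ← (hcomm z e), ← mul_assoc, hid]
  have hop : adjoint U * Z z * E e * U = adjoint U * (Z z * E e * Z z) * U := by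
    rw [← hZE, mul_assoc (adjoint U) (Z z) (E e)]
  have hp0 : p₀ z e = (⟪x, T x⟫_ℂ).re := by
    rw [hp₀ z e, hop]
    congr 1
    calc ⟪Ψ, (adjoint U * (Z z * E e * Z z) * U) Ψ⟫_ℂ
        = ⟪Ψ, (adjoint U) ((Z z) ((E e) ((Z z) (U Ψ))))⟫_ℂ := by
          simp [ContinuousLinearMap.mul_apply]
      _ = ⟪U Ψ, (Z z) ((E e) ((Z z) (U Ψ)))⟫_ℂ := by rw [adjoint_inner_right]
      _ = ⟪(Z z) (U Ψ), (E e) ((Z z) (U Ψ))⟫_ℂ := by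
          conv_lhs => rw [← hZadj]
          rw [adjoint_inner_right, hZadj]
      _ = ⟪x, T x⟫_ℂ := rfl
  have hqq : q z e = (⟪y, T y⟫_ℂ).re := by
    rw [hq z e]
    congr 1
    calc ⟪Ψ, (adjoint (C z) * E e * C z) Ψ⟫_ℂ
        = ⟪Ψ, (adjoint (C z)) ((E e) ((C z) Ψ))⟫_ℂ := by
          simp [ContinuousLinearMap.mul_apply]
      _ = ⟪(C z) Ψ, (E e) ((C z) Ψ)⟫_ℂ := by rw [adjoint_inner_right]
  have hyxre : (⟪y, T x⟫_ℂ).re = (⟪x, T y⟫_ℂ).re := by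
    rw [← inner_conj_symm y (T x), Complex.conj_re]
    exact congrArg Complex.re (hsym x y)
  set r := (⟪x, T y⟫_ℂ).re with hrdef
  have hdiff : pSIFT z e - p₀ z e = 2 * r + q z e := by
    rw [hpS, hp0, hqq]
    simp only [map_add, inner_add_left, inner_add_right, Complex.add_re]
    rw [hyxre]; ring
  have hcs : |r| ≤ Real.sqrt (p₀ z e) * Real.sqrt (q z e) := by
    rw [hp0, hqq]; exact cs_pos hTpos x y
  have hq0 : (0:ℝ) ≤ q z e := by
    rw [hqq]; exact (Complex.nonneg_iff.mp (hTpos.inner_nonneg_right y)).1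
  rw [hdiff]
  calc |2 * r + q z e| ≤ |2 * r| + |q z e| := abs_add_le _ _
    _ = 2 * |r| + q z e := by rw [abs_of_nonneg hq0, abs_mul]; norm_num
    _ ≤ 2 * (Real.sqrt (p₀ z e) * Real.sqrt (q z e)) + q z e := by linarith
    _ = 2 * Real.sqrt (p₀ z e) * Real.sqrt (q z e) + q z e := by ring
end

section
/- With notation as in the protocol setting, |√(p_SIFT(z,e)) − √(p₀(z,e))| ≤ (2 p₀(z,e)^{1/2} ⟨Ψ|C_z* E_e C_z|Ψ⟩^{1/2} + ⟨Ψ|C_z* E_e C_z|Ψ⟩)^{1/2}. -/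
open Finset ContinuousLinearMap
open scoped InnerProductSpace

section aux
variable {H : Type*} [NormedAddCommGroup H] [InnerProductSpace ℂ H] [FiniteDimensional ℂ H]

/-- Cauchy–Schwarz for the semi-inner product induced by a positive operator. -/
lemma pos_op_cauchy_schwarz (T : H →L[ℂ] H) (hT : T.IsPositive) (x y : H) :
    ‖(⟪x, T y⟫_ℂ)‖ ≤ Real.sqrt (⟪x, T x⟫_ℂ).re * Real.sqrt (⟪y, T y⟫_ℂ).re := by
  have hTadj : adjoint T = T := by
    rw [← ContinuousLinearMap.star_eq_adjoint]; exact hT.isSelfAdjoint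
  letI core : PreInnerProductSpace.Core ℂ H :=
    { inner := fun a b => ⟪a, T b⟫_ℂ
      conj_inner_symm := fun a b => by
        show (starRingEnd ℂ) ⟪b, T a⟫_ℂ = ⟪a, T b⟫_ℂ
        rw [inner_conj_symm]
        nth_rewrite 1 [← hTadj]
        rw [adjoint_inner_left]
      re_inner_nonneg := fun a => hT.re_inner_nonneg_right a
      add_left := fun a b c => inner_add_left a b (T c)
      smul_left := fun a b r => inner_smul_left a (T b) r }
  have key : ‖(⟪x, T y⟫_ℂ)‖ * ‖(⟪y, T x⟫_ℂ)‖ ≤ (⟪x, T x⟫_ℂ).re * (⟪y, T y⟫_ℂ).re :=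
    @InnerProductSpace.Core.inner_mul_inner_self_le ℂ H _ _ _ core x y
  have hsym : ‖(⟪y, T x⟫_ℂ)‖ = ‖(⟪x, T y⟫_ℂ)‖ := by
    have h1 : ⟪y, T x⟫_ℂ = (starRingEnd ℂ) ⟪x, T y⟫_ℂ := by
      rw [← inner_conj_symm]
      congr 1
      nth_rewrite 1 [← hTadj]
      rw [adjoint_inner_left]
    rw [h1, RCLike.norm_conj]
  rw [hsym, ← sq] at key
  have ha : 0 ≤ (⟪x, T x⟫_ℂ).re := hT.re_inner_nonneg_right x
  have hb : 0 ≤ (⟪y, T y⟫_ℂ).re := hT.re_inner_nonneg_right y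
  rw [← Real.sqrt_mul ha]
  exact Real.le_sqrt_of_sq_le key

end aux

lemma sqrt_add_le' {x y : ℝ} (hx : 0 ≤ x) (hy : 0 ≤ y) :
    Real.sqrt (x + y) ≤ Real.sqrt x + Real.sqrt y := by
  have h : x + y ≤ (Real.sqrt x + Real.sqrt y) ^ 2 := by
    nlinarith [Real.sq_sqrt hx, Real.sq_sqrt hy, Real.sqrt_nonneg x, Real.sqrt_nonneg y]
  calc Real.sqrt (x + y) ≤ Real.sqrt ((Real.sqrt x + Real.sqrt y) ^ 2) := Real.sqrt_le_sqrt h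
    _ = Real.sqrt x + Real.sqrt y := Real.sqrt_sq (by positivity)

lemma abs_sqrt_sub_sqrt_le {a b : ℝ} (ha : 0 ≤ a) (hb : 0 ≤ b) :
    |Real.sqrt a - Real.sqrt b| ≤ Real.sqrt |a - b| := by
  wlog h : b ≤ a generalizing a b
  · rw [abs_sub_comm, abs_sub_comm a b]; exact this hb ha (le_of_not_ge h)
  rw [abs_of_nonneg (sub_nonneg.2 (Real.sqrt_le_sqrt h)), abs_of_nonneg (sub_nonneg.2 h),
    sub_le_iff_le_add]
  calc Real.sqrt a = Real.sqrt ((a - b) + b) := by ring_nf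
    _ ≤ Real.sqrt (a - b) + Real.sqrt b := sqrt_add_le' (sub_nonneg.2 h) hb

theorem stmt11 {H : Type*} [NormedAddCommGroup H] [InnerProductSpace ℂ H]
    [FiniteDimensional ℂ H] {ι : Type*} [Fintype ι]
    (Ψ : H) (hΨ : ‖Ψ‖ = 1)
    (U : H →L[ℂ] H) (hU : U ∈ unitary (H →L[ℂ] H))
    (Z : Fin 2 → (H →L[ℂ] H))
    (hproj : ∀ z, IsIdempotentElem (Z z) ∧ IsSelfAdjoint (Z z))
    (hZsum : Z 0 + Z 1 = 1)
    (E : ι → (H →L[ℂ] H)) (hEpos : ∀ e, (E e).IsPositive) (hEsum : ∑ e, E e = 1)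
    (hcomm : ∀ z e, Commute (Z z) (E e))
    (C : Fin 2 → (H →L[ℂ] H))
    (hC : ∀ z, C z = Z (z + 1) * U * Z z - Z z * U * Z (z + 1))
    (pSIFT p₀ q : Fin 2 → ι → ℝ)
    (hpSIFT : ∀ z e, pSIFT z e = (⟪Ψ, (Z z * adjoint U * E e * U * Z z) Ψ⟫_ℂ).re)
    (hp₀ : ∀ z e, p₀ z e = (⟪Ψ, (adjoint U * Z z * E e * U) Ψ⟫_ℂ).re)
    (hq : ∀ z e, q z e = (⟪Ψ, (adjoint (C z) * E e * C z) Ψ⟫_ℂ).re) :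
    ∀ z e, |Real.sqrt (pSIFT z e) - Real.sqrt (p₀ z e)| ≤
      Real.sqrt (2 * Real.sqrt (p₀ z e) * Real.sqrt (q z e) + q z e) := by
  intro z e
  -- adjoint facts
  have hadj_mul : ∀ A B : H →L[ℂ] H, adjoint (A * B) = adjoint B * adjoint A := by
    intro A B
    rw [← ContinuousLinearMap.star_eq_adjoint, ← ContinuousLinearMap.star_eq_adjoint,
      ← ContinuousLinearMap.star_eq_adjoint, star_mul]
  have hZadj : adjoint (Z z) = Z z := by
    rw [← ContinuousLinearMap.star_eq_adjoint]; exact (hproj z).2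
  -- generic sandwich lemma
  have key : ∀ (A B : H →L[ℂ] H), (⟪Ψ, (adjoint A * B * A) Ψ⟫_ℂ) = ⟪A Ψ, B (A Ψ)⟫_ℂ := by
    intro A B
    simp [ContinuousLinearMap.mul_apply, adjoint_inner_right]
  set v : H := (Z z * U) Ψ with hv
  set w : H := C z Ψ with hw
  -- pSIFT as a quadratic form value
  have hP : pSIFT z e = (⟪(U * Z z) Ψ, E e ((U * Z z) Ψ)⟫_ℂ).re := by
    rw [hpSIFT, show Z z * adjoint U * E e * U * Z z = adjoint (U * Z z) * E e * (U * Z z) by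
      rw [hadj_mul, hZadj]; noncomm_ring, key]
  have hZEZ : Z z * E e * Z z = Z z * E e := by
    rw [(hcomm z e).eq, mul_assoc, (hproj z).1]
  have hop : adjoint U * Z z * E e * U = adjoint (Z z * U) * E e * (Z z * U) := by
    rw [hadj_mul, hZadj]
    calc adjoint U * Z z * E e * U = adjoint U * (Z z * E e) * U := by noncomm_ring
      _ = adjoint U * (Z z * E e * Z z) * U := by rw [hZEZ]
      _ = adjoint U * Z z * E e * (Z z * U) := by noncomm_ring
  have hA : p₀ z e = (⟪v, E e v⟫_ℂ).re := by
    rw [hp₀, hv, hop, key]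
  have hB : q z e = (⟪w, E e w⟫_ℂ).re := by
    rw [hq, hw, ← key (C z) (E e)]
  -- decomposition
  have hz1 : Z (z + 1) = 1 - Z z := by
    fin_cases z
    · rw [eq_sub_iff_add_eq]; simpa [add_comm] using hZsum
    · show Z (1 + 1) = 1 - Z 1
      rw [show ((1 : Fin 2) + 1) = 0 by decide, eq_sub_iff_add_eq]; exact hZsum
  have hCz : C z = U * Z z - Z z * U := by
    rw [hC z, hz1]; noncomm_ring
  have hdecomp : (U * Z z) Ψ = v + w := by
    rw [hv, hw, hCz]; simp
  -- expansion
  have hEadj : adjoint (E e) = E e := by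
    rw [← ContinuousLinearMap.star_eq_adjoint]; exact (hEpos e).isSelfAdjoint
  have hre_symm : (⟪w, E e v⟫_ℂ).re = (⟪v, E e w⟫_ℂ).re := by
    have h1 : ⟪w, E e v⟫_ℂ = (starRingEnd ℂ) ⟪v, E e w⟫_ℂ := by
      rw [← inner_conj_symm]
      congr 1
      nth_rewrite 1 [← hEadj]
      rw [adjoint_inner_left]
    rw [h1, Complex.conj_re]
  have hexp : pSIFT z e = p₀ z e + q z e + 2 * (⟪v, E e w⟫_ℂ).re := by
    rw [hP, hdecomp, hA, hB]
    simp only [inner_add_left, map_add, inner_add_right, Complex.add_re]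
    rw [hre_symm]
    ring
  -- nonnegativity
  have ha : 0 ≤ p₀ z e := by rw [hA]; exact (hEpos e).re_inner_nonneg_right v
  have hb : 0 ≤ q z e := by rw [hB]; exact (hEpos e).re_inner_nonneg_right w
  have hP0 : 0 ≤ pSIFT z e := by
    rw [hP]; exact (hEpos e).re_inner_nonneg_right _
  -- Cauchy–Schwarz
  have hCS : ‖(⟪v, E e w⟫_ℂ)‖ ≤ Real.sqrt (p₀ z e) * Real.sqrt (q z e) := by
    rw [hA, hB]
    exact pos_op_cauchy_schwarz (E e) (hEpos e) v w
  -- difference bound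
  have hdiff : |pSIFT z e - p₀ z e| ≤ 2 * Real.sqrt (p₀ z e) * Real.sqrt (q z e) + q z e := by
    rw [hexp]
    have habs : |(⟪v, E e w⟫_ℂ).re| ≤ ‖(⟪v, E e w⟫_ℂ)‖ := Complex.abs_re_le_norm _
    calc |p₀ z e + q z e + 2 * (⟪v, E e w⟫_ℂ).re - p₀ z e|
        = |2 * (⟪v, E e w⟫_ℂ).re + q z e| := by ring_nf
      _ ≤ |2 * (⟪v, E e w⟫_ℂ).re| + |q z e| := abs_add_le _ _
      _ = 2 * |(⟪v, E e w⟫_ℂ).re| + q z e := by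
          rw [abs_mul, abs_of_nonneg hb]; norm_num
      _ ≤ 2 * ‖(⟪v, E e w⟫_ℂ)‖ + q z e := by linarith
      _ ≤ 2 * (Real.sqrt (p₀ z e) * Real.sqrt (q z e)) + q z e := by linarith
      _ = 2 * Real.sqrt (p₀ z e) * Real.sqrt (q z e) + q z e := by ring
  calc |Real.sqrt (pSIFT z e) - Real.sqrt (p₀ z e)|
      ≤ Real.sqrt |pSIFT z e - p₀ z e| := abs_sqrt_sub_sqrt_le hP0 ha
    _ ≤ Real.sqrt (2 * Real.sqrt (p₀ z e) * Real.sqrt (q z e) + q z e) :=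
        Real.sqrt_le_sqrt hdiff
end
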